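/- arXiv:2402.04038 — 2 statements merged into one kernel-verified Lean document; each statement's English description precedes it below -/
import Mathlib

section
/- Let f_w be an l-layer GCN (l ≥ 2) with nonzero weight matrices W_1,…,W_l, and let ΔW_1,…,ΔW_l be perturbation matrices of matching sizes with ‖ΔW_i‖₂ ≤ ‖W_i‖₂ / l for all i ∈ [l]. Then for any graph G = (X, A) on n nodes: ‖f_{w+Δw}(G) − f_w(G)‖₂ ≤ (1/√n) · e · ‖X‖_F · ‖P_G‖₂^{l−1} · (∏_{i=1}^l ‖W_i‖₂) · Σ_{i=1}^l (‖ΔW_i‖₂ / ‖W_i‖₂); in particular, if moreover ‖X‖₂ ≤ B, then ‖f_{w+Δw}(G) − f_w(G)‖₂ ≤ e · B · (∏_{i=1}^l ‖W_i‖₂) · Σ_{i=1}^l (‖ΔW_i‖₂ / ‖W_i‖₂). -/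
/-!
Let `H_k`, `H'_k` be the node representations under `W` and `W + ΔW`, and `w_i = ‖W_i‖₂`,
`δ_i = ‖ΔW_i‖₂`. Since ReLU is entrywise 1-Lipschitz and `‖M N‖_F ≤ ‖M‖₂ ‖N‖_F`, induction on
the layers gives `‖H'_k - H_k‖_F ≤ ‖X‖_F ‖P‖₂^k (∏_{i<k} (w_i + δ_i) - ∏_{i<k} w_i)`, and
averaging over the `n` nodes costs a factor `1/√n`. With `r_i = δ_i / w_i ≤ 1/l`, so that
`∑ r_i ≤ 1`, we get `∏ (1 + r_i) - 1 ≤ exp (∑ r_i) - 1 ≤ e ∑ r_i`. For the second bound,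
`‖P_G‖₂ ≤ 1` by a Schur test with the positive eigenvector `D̃^{1/2} 1`, and `‖X‖_F ≤ √n ‖X‖₂`.
-/

open MeasureTheory Matrix Finset

noncomputable section

/-- Spectral norm of a real matrix: the operator norm induced by Euclidean vector norms. -/
def specNorm {m n : Type*} [Fintype m] [Fintype n] [DecidableEq n] (A : Matrix m n ℝ) : ℝ :=
  ‖LinearMap.toContinuousLinearMap (Matrix.toEuclideanLin A)‖

/-- Frobenius norm of a real matrix. -/
def frobNorm {m n : Type*} [Fintype m] [Fintype n] (A : Matrix m n ℝ) : ℝ :=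
  Real.sqrt (∑ i, ∑ j, (A i j) ^ 2)

/-- Euclidean norm of a finite real vector. -/
def euclNorm {n : Type*} [Fintype n] (v : n → ℝ) : ℝ :=
  Real.sqrt (∑ i, (v i) ^ 2)

/-- Entrywise ReLU on a matrix. -/
def relu {m k : Type*} (M : Matrix m k ℝ) : Matrix m k ℝ := M.map (fun x => max x 0)

/-- Node representations of a GCN: `H_0 = X`, `H_{k+1} = σ(P H_k W_{k+1})`
(we index weights from `0`, so `W k` is the paper's `W_{k+1}`). -/
def gcnRep {n : ℕ} (d : ℕ → ℕ) (W : ∀ k : ℕ, Matrix (Fin (d k)) (Fin (d (k + 1))) ℝ)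
    (P : Matrix (Fin n) (Fin n) ℝ) (X : Matrix (Fin n) (Fin (d 0)) ℝ) :
    (k : ℕ) → Matrix (Fin n) (Fin (d k)) ℝ
  | 0 => X
  | (k + 1) => relu (P * gcnRep d W P X k * W k)

/-- Output (readout) of an `l`-layer GCN: `f_w(G) = H_l = (1/n) 1_n H_{l-1} W_l`. -/
def gcnOut {n : ℕ} (d : ℕ → ℕ) (W : ∀ k : ℕ, Matrix (Fin (d k)) (Fin (d (k + 1))) ℝ)
    (P : Matrix (Fin n) (Fin n) ℝ) (X : Matrix (Fin n) (Fin (d 0)) ℝ) :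
    (l : ℕ) → Fin (d l) → ℝ
  | 0 => fun _ => 0
  | (l + 1) => fun j => (n : ℝ)⁻¹ * ∑ i, (gcnRep d W P X l * W l) i j

/-- Normalized graph Laplacian `P_G = D̃^{-1/2} Ã D̃^{-1/2}` with `Ã = A + I` and
`D̃ = diag(∑_j Ã_{ij})`, written entrywise. -/
def gcnLap {n : ℕ} (A : Matrix (Fin n) (Fin n) ℝ) : Matrix (Fin n) (Fin n) ℝ :=
  Matrix.of fun i j =>
    (A + 1) i j / (Real.sqrt (∑ k, (A + 1) i k) * Real.sqrt (∑ k, (A + 1) j k))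

open scoped Matrix.Norms.L2Operator

section Norms

variable {m n p : Type*} [Fintype m] [Fintype n] [Fintype p]

lemma euclNorm_eq_norm (v : m → ℝ) :
    euclNorm v = ‖(EuclideanSpace.equiv m ℝ).symm v‖ := by
  simp [euclNorm, EuclideanSpace.norm_eq]

lemma euclNorm_nonneg (v : m → ℝ) : 0 ≤ euclNorm v := Real.sqrt_nonneg _

lemma sq_euclNorm (v : m → ℝ) : euclNorm v ^ 2 = ∑ i, v i ^ 2 :=
  Real.sq_sqrt (sum_nonneg fun _ _ => sq_nonneg _)

lemma frobNorm_nonneg (A : Matrix m n ℝ) : 0 ≤ frobNorm A := Real.sqrt_nonneg _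

lemma sq_frobNorm (A : Matrix m n ℝ) : frobNorm A ^ 2 = ∑ i, ∑ j, A i j ^ 2 :=
  Real.sq_sqrt (sum_nonneg fun _ _ => sum_nonneg fun _ _ => sq_nonneg _)

lemma frobNorm_eq_euclNorm (A : Matrix m n ℝ) :
    frobNorm A = euclNorm (fun q : m × n => A q.1 q.2) := by
  rw [euclNorm, frobNorm, Fintype.sum_prod_type]

lemma frobNorm_add_le (A B : Matrix m n ℝ) : frobNorm (A + B) ≤ frobNorm A + frobNorm B := by
  simp only [frobNorm_eq_euclNorm, euclNorm_eq_norm]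
  exact (congrArg norm (map_add _ _ _)).trans_le (norm_add_le _ _)

lemma frobNorm_transpose (A : Matrix m n ℝ) : frobNorm Aᵀ = frobNorm A := by
  rw [frobNorm, frobNorm, sum_comm]; rfl

lemma frobNorm_one [DecidableEq m] :
    frobNorm (1 : Matrix m m ℝ) = Real.sqrt (Fintype.card m) := by
  simp [frobNorm, Matrix.one_apply]

lemma frobNorm_le_of_abs_le {A B : Matrix m n ℝ} (h : ∀ i j, |A i j| ≤ |B i j|) :
    frobNorm A ≤ frobNorm B :=
  Real.sqrt_le_sqrt <| sum_le_sum fun i _ => sum_le_sum fun j _ => sq_le_sq.2 (h i j)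

lemma frobNorm_relu_le (M : Matrix m n ℝ) : frobNorm (relu M) ≤ frobNorm M :=
  frobNorm_le_of_abs_le fun i j => by
    simpa [relu] using abs_max_sub_max_le_abs (M i j) 0 0

lemma frobNorm_relu_sub_relu_le (M N : Matrix m n ℝ) :
    frobNorm (relu M - relu N) ≤ frobNorm (M - N) :=
  frobNorm_le_of_abs_le fun i j => by
    simpa [relu] using abs_max_sub_max_le_abs (M i j) (N i j) 0

variable [DecidableEq n]

lemma specNorm_eq_norm (A : Matrix m n ℝ) : specNorm A = ‖A‖ := rfl

lemma specNorm_nonneg (A : Matrix m n ℝ) : 0 ≤ specNorm A := norm_nonneg _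

lemma specNorm_add_le (A B : Matrix m n ℝ) : specNorm (A + B) ≤ specNorm A + specNorm B :=
  norm_add_le A B

lemma specNorm_transpose [DecidableEq m] (A : Matrix m n ℝ) : specNorm Aᵀ = specNorm A := by
  rw [specNorm_eq_norm, specNorm_eq_norm, ← conjTranspose_eq_transpose_of_trivial,
    l2_opNorm_conjTranspose]

lemma euclNorm_mulVec_le (A : Matrix m n ℝ) (v : n → ℝ) :
    euclNorm (A *ᵥ v) ≤ specNorm A * euclNorm v := by
  simpa [euclNorm_eq_norm, specNorm_eq_norm] using
    A.l2_opNorm_mulVec ((EuclideanSpace.equiv n ℝ).symm v)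

lemma specNorm_le_of_euclNorm_mulVec_le (A : Matrix m n ℝ) {c : ℝ} (hc : 0 ≤ c)
    (h : ∀ v, euclNorm (A *ᵥ v) ≤ c * euclNorm v) : specNorm A ≤ c :=
  ContinuousLinearMap.opNorm_le_bound _ hc fun x => by
    simpa [euclNorm_eq_norm, toLpLin_apply] using h x.ofLp

lemma frobNorm_mul_le_specNorm_mul (A : Matrix m n ℝ) (H : Matrix n p ℝ) :
    frobNorm (A * H) ≤ specNorm A * frobNorm H := by
  have hcol : ∀ j, ∑ i, (A * H) i j ^ 2 ≤ specNorm A ^ 2 * ∑ i, H i j ^ 2 := fun j => by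
    have := pow_le_pow_left₀ (euclNorm_nonneg _) (euclNorm_mulVec_le A fun i => H i j) 2
    simpa [mul_pow, sq_euclNorm, Matrix.mul_apply, Matrix.mulVec, dotProduct] using this
  refine le_of_sq_le_sq ?_ (mul_nonneg (specNorm_nonneg A) (frobNorm_nonneg H))
  rw [mul_pow, sq_frobNorm, sq_frobNorm, sum_comm, sum_comm (f := fun i j => H i j ^ 2),
    mul_sum]
  exact sum_le_sum fun j _ => hcol j

lemma frobNorm_mul_le_mul_specNorm [DecidableEq p] (H : Matrix m n ℝ) (B : Matrix n p ℝ) :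
    frobNorm (H * B) ≤ frobNorm H * specNorm B := by
  rw [← frobNorm_transpose, transpose_mul, ← frobNorm_transpose H, ← specNorm_transpose B,
    mul_comm]
  exact frobNorm_mul_le_specNorm_mul _ _

end Norms

lemma specNorm_le_one_of_mulVec_eq_self {m : Type*} [Fintype m] [DecidableEq m]
    {M : Matrix m m ℝ} (hsymm : M.IsSymm) (hM : ∀ i j, 0 ≤ M i j) {u : m → ℝ}
    (hu : ∀ i, 0 < u i) (hMu : M *ᵥ u = u) : specNorm M ≤ 1 := by
  refine specNorm_le_of_euclNorm_mulVec_le M zero_le_one fun v => ?_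
  rw [one_mul]
  refine le_of_sq_le_sq ?_ (euclNorm_nonneg v)
  rw [sq_euclNorm, sq_euclNorm]
  have hrow : ∀ i, ∑ j, M i j * u j = u i := fun i => congrFun hMu i
  have hcol : ∀ j, ∑ i, u i * M i j = u j := fun j => by
    rw [← hrow j]
    exact sum_congr rfl fun i _ => by rw [hsymm.apply j i, mul_comm]
  -- Cauchy–Schwarz against the weights `M i j * u j`, whose row sums are `u i`
  have hCS : ∀ i, (M *ᵥ v) i ^ 2 ≤ u i * ∑ j, M i j * v j ^ 2 / u j := fun i => by
    rw [← hrow i]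
    refine sum_sq_le_sum_mul_sum_of_sq_le_mul _ (fun j _ => mul_nonneg (hM i j) (hu j).le)
      (fun j _ => div_nonneg (mul_nonneg (hM i j) (sq_nonneg _)) (hu j).le) fun j _ => ?_
    refine le_of_eq ?_
    field_simp [(hu j).ne']
  calc ∑ i, (M *ᵥ v) i ^ 2 ≤ ∑ i, u i * ∑ j, M i j * v j ^ 2 / u j :=
        sum_le_sum fun i _ => hCS i
    _ = ∑ j, (∑ i, u i * M i j) * (v j ^ 2 / u j) := by
      simp only [mul_sum, sum_mul]
      rw [sum_comm]
      refine sum_congr rfl fun j _ => sum_congr rfl fun i _ => by ring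
    _ = ∑ j, v j ^ 2 := sum_congr rfl fun j _ => by rw [hcol, mul_div_cancel₀ _ (hu j).ne']

section GcnLap

variable {n : ℕ} {A : Matrix (Fin n) (Fin n) ℝ}

lemma gcnLap_isSymm (hsymm : A.IsSymm) : (gcnLap A).IsSymm := by
  refine IsSymm.ext fun i j => ?_
  have hij : (A + 1) j i = (A + 1) i j := (hsymm.add isSymm_one).apply i j
  simp only [gcnLap, of_apply, hij, mul_comm]

lemma add_one_apply_nonneg (hA : ∀ i j, 0 ≤ A i j) (i j : Fin n) : 0 ≤ (A + 1) i j := by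
  rw [Matrix.add_apply]
  exact add_nonneg (hA i j) (by rw [one_apply]; split_ifs <;> norm_num)

lemma sqrt_degree_pos (hA : ∀ i j, 0 ≤ A i j) (i : Fin n) :
    0 < Real.sqrt (∑ k, (A + 1) i k) := by
  refine Real.sqrt_pos.2 (lt_of_lt_of_le ?_
    (single_le_sum (fun k _ => add_one_apply_nonneg hA i k) (mem_univ i)))
  simpa using add_pos_of_nonneg_of_pos (hA i i) one_pos

lemma gcnLap_mulVec_sqrt_degree (hA : ∀ i j, 0 ≤ A i j) :
    gcnLap A *ᵥ (fun i => Real.sqrt (∑ k, (A + 1) i k)) =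
      fun i => Real.sqrt (∑ k, (A + 1) i k) := by
  funext i
  have hterm : ∀ j, gcnLap A i j * Real.sqrt (∑ k, (A + 1) j k) =
      (A + 1) i j / Real.sqrt (∑ k, (A + 1) i k) := fun j => by
    rw [gcnLap, of_apply, div_mul_eq_mul_div, mul_div_mul_right _ _ (sqrt_degree_pos hA j).ne']
  simp only [mulVec, dotProduct, hterm, ← sum_div]
  exact Real.div_sqrt

lemma specNorm_gcnLap_le_one (hA : ∀ i j, 0 ≤ A i j) (hsymm : A.IsSymm) :
    specNorm (gcnLap A) ≤ 1 :=
  specNorm_le_one_of_mulVec_eq_self (gcnLap_isSymm hsymm)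
    (fun i j => div_nonneg (add_one_apply_nonneg hA i j)
      (mul_nonneg (Real.sqrt_nonneg _) (Real.sqrt_nonneg _)))
    (sqrt_degree_pos hA) (gcnLap_mulVec_sqrt_degree hA)

end GcnLap

lemma inv_sqrt_card_mul_frobNorm_le_specNorm {m n : Type*} [Fintype m] [Fintype n]
    [DecidableEq m] [DecidableEq n] (X : Matrix m n ℝ) :
    (Real.sqrt (Fintype.card m))⁻¹ * frobNorm X ≤ specNorm X := by
  have hX : frobNorm X ≤ Real.sqrt (Fintype.card m) * specNorm X := by
    simpa [frobNorm_one] using frobNorm_mul_le_mul_specNorm (1 : Matrix m m ℝ) X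
  calc (Real.sqrt (Fintype.card m))⁻¹ * frobNorm X
      ≤ (Real.sqrt (Fintype.card m))⁻¹ * Real.sqrt (Fintype.card m) * specNorm X := by
        rw [mul_assoc]; exact mul_le_mul_of_nonneg_left hX (by positivity)
    _ ≤ specNorm X :=
        mul_le_of_le_one_left (specNorm_nonneg X) (inv_mul_le_one_of_le₀ le_rfl (by positivity))

lemma euclNorm_mean_le {m p : Type*} [Fintype m] [Fintype p] (M : Matrix m p ℝ) :
    euclNorm (fun j => (Fintype.card m : ℝ)⁻¹ * ∑ i, M i j) ≤
      (Real.sqrt (Fintype.card m))⁻¹ * frobNorm M := by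
  set c : ℝ := (Fintype.card m : ℝ)
  have hcol : ∀ j, (c⁻¹ * ∑ i, M i j) ^ 2 ≤ c⁻¹ * ∑ i, M i j ^ 2 := fun j =>
    calc (c⁻¹ * ∑ i, M i j) ^ 2 = c⁻¹ ^ 2 * (∑ i, M i j) ^ 2 := mul_pow _ _ _
      _ ≤ c⁻¹ ^ 2 * (c * ∑ i, M i j ^ 2) :=
        mul_le_mul_of_nonneg_left (sq_sum_le_card_mul_sum_sq ..) (sq_nonneg _)
      _ = c⁻¹ * ∑ i, M i j ^ 2 := by
        rcases eq_or_ne c 0 with hc | hc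
        · simp [hc]
        · field_simp
  refine le_of_sq_le_sq ?_ (mul_nonneg (by positivity) (frobNorm_nonneg M))
  rw [sq_euclNorm, mul_pow, inv_pow, Real.sq_sqrt (Nat.cast_nonneg _), sq_frobNorm, sum_comm,
    mul_sum]
  exact sum_le_sum fun j _ => hcol j

lemma prod_one_add_sub_one_le_exp_one_mul {ι : Type*} (s : Finset ι) {r : ι → ℝ}
    (hr : ∀ i ∈ s, 0 ≤ r i) (hsum : ∑ i ∈ s, r i ≤ 1) :
    ∏ i ∈ s, (1 + r i) - 1 ≤ Real.exp 1 * ∑ i ∈ s, r i := by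
  set x := ∑ i ∈ s, r i
  have hx : 0 ≤ x := sum_nonneg hr
  have hprod : ∏ i ∈ s, (1 + r i) ≤ Real.exp x := by
    rw [Real.exp_sum]
    exact prod_le_prod (fun i hi => by linarith [hr i hi])
      fun i _ => by linarith [Real.add_one_le_exp (r i)]
  have hexp : Real.exp x - 1 ≤ x * Real.exp x := by
    have := mul_le_mul_of_nonneg_left (Real.one_sub_le_exp_neg x) (Real.exp_pos x).le
    rw [← Real.exp_add, add_neg_cancel, Real.exp_zero] at this
    linarith
  calc ∏ i ∈ s, (1 + r i) - 1 ≤ x * Real.exp x := by linarith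
    _ ≤ x * Real.exp 1 := mul_le_mul_of_nonneg_left (Real.exp_le_exp.2 hsum) hx
    _ = Real.exp 1 * x := mul_comm _ _

lemma prod_add_sub_prod_le_exp_one_mul {ι : Type*} (s : Finset ι) {w δ : ι → ℝ}
    (hw : ∀ i ∈ s, 0 ≤ w i) (hδ : ∀ i ∈ s, 0 ≤ δ i) (hδw : ∀ i ∈ s, δ i ≤ w i / #s) :
    ∏ i ∈ s, (w i + δ i) - ∏ i ∈ s, w i ≤
      Real.exp 1 * (∏ i ∈ s, w i) * ∑ i ∈ s, δ i / w i := by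
  have hratio : ∀ i ∈ s, δ i / w i ≤ (#s : ℝ)⁻¹ := fun i hi => by
    rcases (hw i hi).eq_or_lt with hwi | hwi
    · simp [← hwi]
    · rw [div_le_iff₀ hwi, ← div_eq_inv_mul]; exact hδw i hi
  have hsum : ∑ i ∈ s, δ i / w i ≤ 1 :=
    calc ∑ i ∈ s, δ i / w i ≤ ∑ _i ∈ s, (#s : ℝ)⁻¹ := sum_le_sum hratio
      _ ≤ 1 := by rw [sum_const, nsmul_eq_mul]; exact mul_inv_le_one
  -- factor out `w i`; where `w i = 0` the bound `δ i ≤ w i / #s` forces `δ i = 0`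
  have hfactor : ∀ i ∈ s, w i + δ i ≤ w i * (1 + δ i / w i) := fun i hi => by
    rcases (hw i hi).eq_or_lt with hwi | hwi
    · simpa [← hwi] using hδw i hi
    · rw [mul_add, mul_one, mul_div_cancel₀ _ hwi.ne']
  calc ∏ i ∈ s, (w i + δ i) - ∏ i ∈ s, w i
      ≤ (∏ i ∈ s, w i) * (∏ i ∈ s, (1 + δ i / w i) - 1) := by
        rw [mul_sub, mul_one, ← prod_mul_distrib]
        exact sub_le_sub_right
          (prod_le_prod (fun i hi => add_nonneg (hw i hi) (hδ i hi)) hfactor) _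
    _ ≤ (∏ i ∈ s, w i) * (Real.exp 1 * ∑ i ∈ s, δ i / w i) :=
        mul_le_mul_of_nonneg_left (prod_one_add_sub_one_le_exp_one_mul s
          (fun i hi => div_nonneg (hδ i hi) (hw i hi)) hsum) (prod_nonneg hw)
    _ = Real.exp 1 * (∏ i ∈ s, w i) * ∑ i ∈ s, δ i / w i := by ring

lemma frobNorm_mul_sub_mul_le {a b c : Type*} [Fintype a] [Fintype b] [Fintype c]
    [DecidableEq b] [DecidableEq c] {H H' : Matrix a b ℝ} {B B' : Matrix b c ℝ} {C Q Q' : ℝ}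
    (hH : frobNorm H ≤ C * Q) (hdiff : frobNorm (H' - H) ≤ C * (Q' - Q)) :
    frobNorm (H' * B' - H * B) ≤
      C * (Q' * (specNorm B + specNorm (B' - B)) - Q * specNorm B) := by
  have hB' : specNorm B' ≤ specNorm B + specNorm (B' - B) := by
    simpa using specNorm_add_le B (B' - B)
  calc frobNorm (H' * B' - H * B) = frobNorm ((H' - H) * B' + H * (B' - B)) := by
        rw [Matrix.sub_mul, Matrix.mul_sub]; abel_nf
    _ ≤ frobNorm (H' - H) * specNorm B' + frobNorm H * specNorm (B' - B) :=
        (frobNorm_add_le _ _).trans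
          (add_le_add (frobNorm_mul_le_mul_specNorm _ _) (frobNorm_mul_le_mul_specNorm _ _))
    _ ≤ C * (Q' - Q) * (specNorm B + specNorm (B' - B)) + C * Q * specNorm (B' - B) :=
        add_le_add (mul_le_mul hdiff hB' (specNorm_nonneg _) ((frobNorm_nonneg _).trans hdiff))
          (mul_le_mul_of_nonneg_right hH (specNorm_nonneg _))
    _ = C * (Q' * (specNorm B + specNorm (B' - B)) - Q * specNorm B) := by ring

section Gcn

variable {n : ℕ} (d : ℕ → ℕ) (W W' : ∀ k : ℕ, Matrix (Fin (d k)) (Fin (d (k + 1))) ℝ)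
  (P : Matrix (Fin n) (Fin n) ℝ) (X : Matrix (Fin n) (Fin (d 0)) ℝ)

lemma frobNorm_gcnRep_le (k : ℕ) :
    frobNorm (gcnRep d W P X k) ≤
      frobNorm X * specNorm P ^ k * ∏ i ∈ range k, specNorm (W i) := by
  induction k with
  | zero => simp [gcnRep]
  | succ k ih =>
    calc frobNorm (gcnRep d W P X (k + 1)) ≤ frobNorm (P * gcnRep d W P X k * W k) :=
          frobNorm_relu_le _
      _ ≤ specNorm P * frobNorm (gcnRep d W P X k) * specNorm (W k) := by
          refine (frobNorm_mul_le_mul_specNorm _ _).trans ?_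
          exact mul_le_mul_of_nonneg_right (frobNorm_mul_le_specNorm_mul _ _) (specNorm_nonneg _)
      _ ≤ specNorm P * (frobNorm X * specNorm P ^ k * ∏ i ∈ range k, specNorm (W i)) *
            specNorm (W k) :=
          mul_le_mul_of_nonneg_right (mul_le_mul_of_nonneg_left ih (specNorm_nonneg P))
            (specNorm_nonneg _)
      _ = _ := by rw [prod_range_succ, pow_succ]; ring

lemma frobNorm_gcnRep_sub_le (k : ℕ) :
    frobNorm (gcnRep d W' P X k - gcnRep d W P X k) ≤ frobNorm X * specNorm P ^ k *
      (∏ i ∈ range k, (specNorm (W i) + specNorm (W' i - W i)) -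
        ∏ i ∈ range k, specNorm (W i)) := by
  induction k with
  | zero => simp [gcnRep, frobNorm]
  | succ k ih =>
    calc frobNorm (gcnRep d W' P X (k + 1) - gcnRep d W P X (k + 1))
        ≤ frobNorm (P * gcnRep d W' P X k * W' k - P * gcnRep d W P X k * W k) :=
          frobNorm_relu_sub_relu_le _ _
      _ = frobNorm (P * (gcnRep d W' P X k * W' k - gcnRep d W P X k * W k)) := by
          rw [Matrix.mul_sub, Matrix.mul_assoc, Matrix.mul_assoc]
      _ ≤ specNorm P * (frobNorm X * specNorm P ^ k *
            ((∏ i ∈ range k, (specNorm (W i) + specNorm (W' i - W i))) *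
              (specNorm (W k) + specNorm (W' k - W k)) -
            (∏ i ∈ range k, specNorm (W i)) * specNorm (W k))) :=
          (frobNorm_mul_le_specNorm_mul _ _).trans <| mul_le_mul_of_nonneg_left
            (frobNorm_mul_sub_mul_le (frobNorm_gcnRep_le d W P X k) ih) (specNorm_nonneg P)
      _ = _ := by rw [prod_range_succ, prod_range_succ, pow_succ]; ring

lemma euclNorm_gcnOut_sub_le (l : ℕ) :
    euclNorm (fun j => gcnOut d W' P X l j - gcnOut d W P X l j) ≤
      (Real.sqrt n)⁻¹ * frobNorm X * specNorm P ^ (l - 1) *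
        (∏ i ∈ range l, (specNorm (W i) + specNorm (W' i - W i)) -
          ∏ i ∈ range l, specNorm (W i)) := by
  cases l with
  | zero => simp [gcnOut, euclNorm]
  | succ m =>
    have hout : (fun j => gcnOut d W' P X (m + 1) j - gcnOut d W P X (m + 1) j) =
        fun j => (n : ℝ)⁻¹ * ∑ i, (gcnRep d W' P X m * W' m - gcnRep d W P X m * W m) i j := by
      funext j
      simp only [gcnOut, Matrix.sub_apply, sum_sub_distrib, mul_sub]
    have hmean := euclNorm_mean_le (gcnRep d W' P X m * W' m - gcnRep d W P X m * W m)
    rw [Fintype.card_fin] at hmean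
    rw [hout, Nat.add_sub_cancel, prod_range_succ, prod_range_succ, mul_assoc, mul_assoc,
      ← mul_assoc (frobNorm X)]
    exact hmean.trans <| mul_le_mul_of_nonneg_left
      (frobNorm_mul_sub_mul_le (frobNorm_gcnRep_le d W P X m)
        (frobNorm_gcnRep_sub_le d W W' P X m)) (by positivity)

end Gcn

theorem gcnOut_pert_norm_le_general (n l : ℕ) (d : ℕ → ℕ)
    (W ΔW : ∀ k : ℕ, Matrix (Fin (d k)) (Fin (d (k + 1))) ℝ)
    (hΔ : ∀ k, k < l → specNorm (ΔW k) ≤ specNorm (W k) / l)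
    (X : Matrix (Fin n) (Fin (d 0)) ℝ) (A : Matrix (Fin n) (Fin n) ℝ)
    (hsymm : A.IsSymm) (h01 : ∀ i j, A i j = 0 ∨ A i j = 1) :
    euclNorm (fun j => gcnOut d (fun k => W k + ΔW k) (gcnLap A) X l j -
        gcnOut d W (gcnLap A) X l j) ≤
      (Real.sqrt n)⁻¹ * Real.exp 1 * frobNorm X * specNorm (gcnLap A) ^ (l - 1) *
        (∏ i ∈ Finset.range l, specNorm (W i)) *
        (∑ i ∈ Finset.range l, specNorm (ΔW i) / specNorm (W i)) ∧
    ∀ B : ℝ, specNorm X ≤ B →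
      euclNorm (fun j => gcnOut d (fun k => W k + ΔW k) (gcnLap A) X l j -
          gcnOut d W (gcnLap A) X l j) ≤
        Real.exp 1 * B * (∏ i ∈ Finset.range l, specNorm (W i)) *
          (∑ i ∈ Finset.range l, specNorm (ΔW i) / specNorm (W i)) := by
  set P := gcnLap A
  set Q := ∏ i ∈ range l, specNorm (W i)
  set R := ∑ i ∈ range l, specNorm (ΔW i) / specNorm (W i)
  have hQ : 0 ≤ Q := prod_nonneg fun i _ => specNorm_nonneg _
  have hR : 0 ≤ R := sum_nonneg fun i _ => div_nonneg (specNorm_nonneg _) (specNorm_nonneg _)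
  have hout := euclNorm_gcnOut_sub_le d W (fun k => W k + ΔW k) P X l
  simp only [add_sub_cancel_left] at hout
  have hprod : ∏ i ∈ range l, (specNorm (W i) + specNorm (ΔW i)) - Q ≤ Real.exp 1 * Q * R :=
    prod_add_sub_prod_le_exp_one_mul _ (fun i _ => specNorm_nonneg _)
      (fun i _ => specNorm_nonneg _) (by simpa using hΔ)
  have hbound : euclNorm (fun j => gcnOut d (fun k => W k + ΔW k) P X l j - gcnOut d W P X l j) ≤
      (Real.sqrt n)⁻¹ * Real.exp 1 * frobNorm X * specNorm P ^ (l - 1) * Q * R := by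
    refine hout.trans (le_of_le_of_eq (mul_le_mul_of_nonneg_left hprod ?_) (by ring))
    exact mul_nonneg (mul_nonneg (by positivity) (frobNorm_nonneg X))
      (pow_nonneg (specNorm_nonneg P) _)
  refine ⟨hbound, fun B hB => hbound.trans ?_⟩
  have hX : (Real.sqrt n)⁻¹ * frobNorm X ≤ B := by
    simpa using (inv_sqrt_card_mul_frobNorm_le_specNorm X).trans hB
  have hP : specNorm P ^ (l - 1) ≤ 1 :=
    pow_le_one₀ (specNorm_nonneg P) (specNorm_gcnLap_le_one
      (fun i j => by rcases h01 i j with h | h <;> simp [h]) hsymm)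
  calc _ = Real.exp 1 * ((Real.sqrt n)⁻¹ * frobNorm X * specNorm P ^ (l - 1)) * Q * R := by ring
    _ ≤ Real.exp 1 * B * Q * R := by
      gcongr
      simpa using
        mul_le_mul hX hP (pow_nonneg (specNorm_nonneg P) _) ((specNorm_nonneg X).trans hB)

/-- Perturbation bound for the output of an `l`-layer GCN: if `‖ΔW_i‖₂ ≤ ‖W_i‖₂/l` for all
`i`, then `‖f_{w+Δw}(G) - f_w(G)‖₂ ≤ (1/√n) e ‖X‖_F ‖P_G‖₂^{l-1} (∏‖W_i‖₂) Σ ‖ΔW_i‖₂/‖W_i‖₂`;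
in particular, if `‖X‖₂ ≤ B`, the right-hand side is at most
`e B (∏‖W_i‖₂) Σ ‖ΔW_i‖₂/‖W_i‖₂`. -/
theorem gcnOut_pert_norm_le (n l : ℕ) (hn : 0 < n) (hl : 2 ≤ l) (d : ℕ → ℕ)
    (W ΔW : ∀ k : ℕ, Matrix (Fin (d k)) (Fin (d (k + 1))) ℝ)
    (hW : ∀ k, k < l → W k ≠ 0)
    (hΔ : ∀ k, k < l → specNorm (ΔW k) ≤ specNorm (W k) / l)
    (X : Matrix (Fin n) (Fin (d 0)) ℝ) (A : Matrix (Fin n) (Fin n) ℝ)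
    (hsymm : A.IsSymm) (h01 : ∀ i j, A i j = 0 ∨ A i j = 1) :
    euclNorm (fun j => gcnOut d (fun k => W k + ΔW k) (gcnLap A) X l j -
        gcnOut d W (gcnLap A) X l j) ≤
      (Real.sqrt n)⁻¹ * Real.exp 1 * frobNorm X * specNorm (gcnLap A) ^ (l - 1) *
        (∏ i ∈ Finset.range l, specNorm (W i)) *
        (∑ i ∈ Finset.range l, specNorm (ΔW i) / specNorm (W i)) ∧
    ∀ B : ℝ, specNorm X ≤ B →
      euclNorm (fun j => gcnOut d (fun k => W k + ΔW k) (gcnLap A) X l j -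
          gcnOut d W (gcnLap A) X l j) ≤
        Real.exp 1 * B * (∏ i ∈ Finset.range l, specNorm (W i)) *
          (∑ i ∈ Finset.range l, specNorm (ΔW i) / specNorm (W i)) :=
  gcnOut_pert_norm_le_general n l d W ΔW hΔ X A hsymm h01

end
end

section
/- Let m ≥ 1 be a real number and let X be a real random variable such that for every ε > 0, P(X ≥ ε) ≤ exp(−2mε²) and P(X ≤ −ε) ≤ exp(−2mε²). Then E[exp(2(m−1)X²)] ≤ 2m. -/
open MeasureTheory

/-- If a real random variable `X` satisfies `P(X ≥ ε) ≤ exp(-2mε²)` and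
`P(X ≤ -ε) ≤ exp(-2mε²)` for every `ε > 0`, where `m ≥ 1`, then
`E[exp(2(m-1)X²)] ≤ 2m`. -/
theorem expectation_exp_sq_le (Ω : Type*) [MeasurableSpace Ω] (μ : Measure Ω)
    [IsProbabilityMeasure μ] (m : ℝ) (hm : 1 ≤ m) (X : Ω → ℝ) (hX : Measurable X)
    (hup : ∀ ε : ℝ, 0 < ε → μ {ω | ε ≤ X ω} ≤ ENNReal.ofReal (Real.exp (-2 * m * ε ^ 2)))
    (hdown : ∀ ε : ℝ, 0 < ε → μ {ω | X ω ≤ -ε} ≤ ENNReal.ofReal (Real.exp (-2 * m * ε ^ 2))) :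
    ∫⁻ ω, ENNReal.ofReal (Real.exp (2 * (m - 1) * (X ω) ^ 2)) ∂μ ≤ ENNReal.ofReal (2 * m) := by
  rcases eq_or_lt_of_le hm with heq | hm1
  · subst heq
    simp only [sub_self, mul_zero, zero_mul, Real.exp_zero, ENNReal.ofReal_one, lintegral_one,
      measure_univ, mul_one]
    rw [show (1 : ENNReal) = ENNReal.ofReal 1 by simp]
    exact ENNReal.ofReal_le_ofReal (by norm_num)
  · have hm0 : (0:ℝ) < m - 1 := by linarith
    set c : ℝ := 2 * (m - 1) with hc
    have hc0 : 0 < c := by positivity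
    set p : ℝ := m / (m - 1) with hp
    have hp1 : 1 < p := (one_lt_div hm0).2 (by linarith)
    have hmble : AEMeasurable (fun ω => Real.exp (c * X ω ^ 2)) μ :=
      (Real.measurable_exp.comp ((measurable_const.mul ((hX.pow measurable_const)))))
        |>.aemeasurable
    rw [lintegral_eq_lintegral_meas_lt μ
      (Filter.Eventually.of_forall fun ω => (Real.exp_pos _).le) hmble]
    have hsplit : Set.Ioi (0:ℝ) = Set.Ioc 0 1 ∪ Set.Ioi 1 :=
      (Set.Ioc_union_Ioi_eq_Ioi zero_le_one).symm
    rw [hsplit, lintegral_union measurableSet_Ioi (Set.Ioc_disjoint_Ioi le_rfl)]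
    have piece1 : ∫⁻ t in Set.Ioc (0:ℝ) 1, μ {a | t < Real.exp (c * X a ^ 2)} ≤ 1 := by
      calc ∫⁻ t in Set.Ioc (0:ℝ) 1, μ {a | t < Real.exp (c * X a ^ 2)}
          ≤ ∫⁻ _ in Set.Ioc (0:ℝ) 1, 1 :=
            setLIntegral_mono measurable_const fun t _ => prob_le_one
        _ = 1 := by simp [Real.volume_Ioc]
    have hbound : ∀ t ∈ Set.Ioi (1:ℝ),
        μ {a | t < Real.exp (c * X a ^ 2)} ≤ ENNReal.ofReal (2 * t ^ (-p)) := by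
      intro t ht
      have ht1 : (1:ℝ) < t := ht
      have hlogt : 0 < Real.log t := Real.log_pos ht1
      set ε : ℝ := Real.sqrt (Real.log t / c) with hε
      have hεpos : 0 < ε := Real.sqrt_pos.2 (div_pos hlogt hc0)
      have hε2 : ε ^ 2 = Real.log t / c := Real.sq_sqrt (div_pos hlogt hc0).le
      have hsub : {a | t < Real.exp (c * X a ^ 2)} ⊆
          {ω | ε ≤ X ω} ∪ {ω | X ω ≤ -ε} := by
        intro ω hω
        have h1 : Real.log t < c * X ω ^ 2 := by
          have := Real.log_lt_log (by linarith : (0:ℝ) < t) hω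
          rwa [Real.log_exp] at this
        have h2 : ε ^ 2 < X ω ^ 2 := by
          rw [hε2]
          exact (div_lt_iff₀ hc0).2 (by linarith [mul_comm c (X ω ^ 2)])
        rcases le_or_gt ε (X ω) with h | h
        · exact Or.inl h
        rcases le_or_gt (X ω) (-ε) with h' | h'
        · exact Or.inr h'
        exact absurd h2 (by nlinarith)
      have hval : Real.exp (-2 * m * ε ^ 2) = t ^ (-p) := by
        rw [hε2, Real.rpow_def_of_pos (by linarith : (0:ℝ) < t)]
        rw [hp, hc]
        congr 1
        field_simp
      calc μ {a | t < Real.exp (c * X a ^ 2)}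
          ≤ μ ({ω | ε ≤ X ω} ∪ {ω | X ω ≤ -ε}) := measure_mono hsub
        _ ≤ μ {ω | ε ≤ X ω} + μ {ω | X ω ≤ -ε} := measure_union_le _ _
        _ ≤ ENNReal.ofReal (Real.exp (-2 * m * ε ^ 2))
              + ENNReal.ofReal (Real.exp (-2 * m * ε ^ 2)) :=
            add_le_add (hup ε hεpos) (hdown ε hεpos)
        _ = ENNReal.ofReal (2 * t ^ (-p)) := by
            rw [← ENNReal.ofReal_add (Real.exp_pos _).le (Real.exp_pos _).le, hval]
            ring_nf
    have hint : IntegrableOn (fun t : ℝ => 2 * t ^ (-p)) (Set.Ioi 1) := by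
      exact (integrableOn_Ioi_rpow_of_lt (by linarith : -p < -1) one_pos).const_mul 2
    have hintval : ∫ t in Set.Ioi (1:ℝ), 2 * t ^ (-p) = 2 * (m - 1) := by
      rw [MeasureTheory.integral_const_mul, integral_Ioi_rpow_of_lt (by linarith : -p < -1) one_pos]
      rw [Real.one_rpow, hp]
      have h1 : m - 1 ≠ 0 := hm0.ne'
      have h2 : -(m / (m - 1)) + 1 = -(1 / (m - 1)) := by field_simp; ring
      rw [h2]
      field_simp
    have piece2 : ∫⁻ t in Set.Ioi (1:ℝ), μ {a | t < Real.exp (c * X a ^ 2)}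
        ≤ ENNReal.ofReal (2 * (m - 1)) := by
      calc ∫⁻ t in Set.Ioi (1:ℝ), μ {a | t < Real.exp (c * X a ^ 2)}
          ≤ ∫⁻ t in Set.Ioi (1:ℝ), ENNReal.ofReal (2 * t ^ (-p)) := by
            refine setLIntegral_mono ?_ hbound
            exact ENNReal.measurable_ofReal.comp
              ((measurable_const.mul ((measurable_id.pow_const _).comp measurable_id)))
        _ = ENNReal.ofReal (∫ t in Set.Ioi (1:ℝ), 2 * t ^ (-p)) :=
            (ofReal_integral_eq_lintegral_ofReal hint
              (Filter.eventually_of_mem (self_mem_ae_restrict measurableSet_Ioi)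
                fun t ht => by
                  have : (0:ℝ) < t := lt_trans one_pos ht
                  have h3 := Real.rpow_nonneg this.le (-p)
                  simpa using mul_nonneg (by norm_num : (0:ℝ) ≤ 2) h3)).symm
        _ = ENNReal.ofReal (2 * (m - 1)) := by rw [hintval]
    calc (∫⁻ t in Set.Ioc (0:ℝ) 1, μ {a | t < Real.exp (c * X a ^ 2)})
          + ∫⁻ t in Set.Ioi (1:ℝ), μ {a | t < Real.exp (c * X a ^ 2)}
        ≤ 1 + ENNReal.ofReal (2 * (m - 1)) := add_le_add piece1 piece2
      _ = ENNReal.ofReal (1 + 2 * (m - 1)) := by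
          rw [ENNReal.ofReal_add (by norm_num) (by positivity), ENNReal.ofReal_one]
      _ ≤ ENNReal.ofReal (2 * m) := ENNReal.ofReal_le_ofReal (by linarith)
end
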